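/- If no instance declaration in Φ admits a critical triple — in particular, if every clause (κ : B̄ ⇒ A) ∈ Φ satisfies Paterson's condition, that the multiset union of function symbols and variables of each Bᵢ is a strict sub-multiset of those of A — then every resolution tree over Φ is finite (small-step resolution terminates). -/

import Mathlib

abbrev Var := String
abbrev FSym := String

/-- First-order applicative terms `t ::= x | K t₁ … tₙ`. -/
inductive Tm where
  | var : Var → Tm
  | node : FSym → List Tm → Tm

/-- Substitutions map term variables to terms. -/
abbrev Sb := Var → Tm

def Tm.subst (σ : Sb) : Tm → Tm
  | .var x => σ x
  | .node k ts => .node k (ts.attach.map fun t => Tm.subst σ t.1)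
decreasing_by all_goals (have := List.sizeOf_lt_of_mem t.2; simp_all; omega)

inductive Tm.HasVar : Tm → Var → Prop where
  | var : Tm.HasVar (.var x) x
  | node : t ∈ ts → Tm.HasVar t x → Tm.HasVar (.node k ts) x

inductive Tm.HasConst : Tm → FSym → Prop where
  | head : Tm.HasConst (.node c ts) c
  | arg : t ∈ ts → Tm.HasConst t c → Tm.HasConst (.node k ts) c

def Tm.fvList : Tm → List Var
  | .var x => [x]
  | .node _ ts => ts.attach.flatMap fun t => Tm.fvList t.1
decreasing_by all_goals (have := List.sizeOf_lt_of_mem t.2; simp_all; omega)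

/-- The multiset `Σ(t) ∪ FVar(t)` of function-symbol (inl) and variable (inr) occurrences. -/
def Tm.symbols : Tm → Multiset (FSym ⊕ Var)
  | .var x => {Sum.inr x}
  | .node k ts => Sum.inl k ::ₘ ((ts.attach.map fun t => Tm.symbols t.1).sum)
decreasing_by all_goals (have := List.sizeOf_lt_of_mem t.2; simp_all; omega)

def Sb.comp (σ τ : Sb) : Sb := fun x => (τ x).subst σ

def Sb.pow (σ : Sb) : ℕ → Sb
  | 0 => Tm.var
  | n + 1 => Sb.comp σ (Sb.pow σ n)
/-- Atomic formulas `P t₁ … tₙ`. -/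
structure Atm where
  pred : FSym
  args : List Tm

def Atm.subst (σ : Sb) (A : Atm) : Atm := ⟨A.pred, A.args.map (Tm.subst σ)⟩
def Atm.HasVar (A : Atm) (x : Var) : Prop := ∃ t ∈ A.args, t.HasVar x
def Atm.HasConst (A : Atm) (c : FSym) : Prop := ∃ t ∈ A.args, t.HasConst c
def Atm.fvList (A : Atm) : List Var := A.args.flatMap Tm.fvList
def Atm.symbols (A : Atm) : Multiset (FSym ⊕ Var) := (A.args.map Tm.symbols).sum

/-- A Horn clause `B₁, …, Bₙ ⇒ A` with body `Bᵢ` and head `A`. -/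
structure Cl where
  body : List Atm
  head : Atm

/-- Horn formulas have no existential variables: every variable of the body occurs in the head. -/
def Cl.Wf (c : Cl) : Prop := ∀ B ∈ c.body, ∀ x, B.HasVar x → c.head.HasVar x

/-- An axiom environment: Horn clauses labelled by distinct evidence constants κ. -/
def EnvWf (Φ : List (FSym × Cl)) : Prop :=
  (∀ p ∈ Φ, p.2.Wf) ∧ (Φ.map Prod.fst).Nodup

/-- Paterson's condition for a clause. -/
def Cl.Paterson (c : Cl) : Prop := ∀ B ∈ c.body, B.symbols < c.head.symbols

/-- (Extended) mixed terms `q ::= A | κ | α | λα.q | μα.q | q q'`, together with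
numbered holes so that the same syntax also serves as (multi-hole) mixed-term contexts. -/
inductive Mx where
  | atom : Atm → Mx
  | kappa : FSym → Mx
  | evar : Var → Mx
  | lam : Var → Mx → Mx
  | mu : Var → Mx → Mx
  | app : Mx → Mx → Mx
  | hole : ℕ → Mx

/-- `e e₁ … eₙ`. -/
def appsMx (e : Mx) (es : List Mx) : Mx := es.foldl .app e

/-- `λα₁…λαₙ.e`. -/
def lamList (as : List Var) (e : Mx) : Mx := as.foldr .lam e

/-- The list of atomic formulas occurring in a mixed term (or context): `|C|`. -/
def Mx.atoms : Mx → List Atm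
  | .atom A => [A]
  | .app q r => q.atoms ++ r.atoms
  | .lam _ q => q.atoms
  | .mu _ q => q.atoms
  | _ => []

/-- Fill the holes of a context. -/
def Mx.fill (f : ℕ → Mx) : Mx → Mx
  | .hole i => f i
  | .app q r => .app (q.fill f) (r.fill f)
  | .lam a q => .lam a (q.fill f)
  | .mu a q => .mu a (q.fill f)
  | q => q

/-- Fill all holes of a context with the same mixed term (single-hole case `C[q]`). -/
def Mx.fill1 (C q : Mx) : Mx := C.fill (fun _ => q)

/-- Contexts `C ::= • | C q | q C` built from application only. -/
inductive IsAppCtx : Mx → Prop where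
  | hole : IsAppCtx (.hole n)
  | appL : IsAppCtx C → IsAppCtx (.app C q)
  | appR : IsAppCtx C → IsAppCtx (.app q C)

/-- Apply a term substitution inside the atoms of a mixed term. -/
def Mx.tsubst (σ : Sb) : Mx → Mx
  | .atom A => .atom (A.subst σ)
  | .app q r => .app (q.tsubst σ) (r.tsubst σ)
  | .lam a q => .lam a (q.tsubst σ)
  | .mu a q => .mu a (q.tsubst σ)
  | q => q

/-- Substitute evidence `s` for the evidence variable `α` (capture-naive). -/
def Mx.esubst (a : Var) (s : Mx) : Mx → Mx
  | .evar b => if b = a then s else .evar b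
  | .lam b q => if b = a then .lam b q else .lam b (Mx.esubst a s q)
  | .mu b q => if b = a then .mu b q else .mu b (Mx.esubst a s q)
  | .app q r => .app (Mx.esubst a s q) (Mx.esubst a s r)
  | q => q

/-- Pure (first-order) evidence terms `e ::= κ | e e'`. -/
inductive IsEvidence : Mx → Prop where
  | kappa : IsEvidence (.kappa k)
  | app : IsEvidence q → IsEvidence r → IsEvidence (.app q r)

inductive IsSpine : Mx → Prop where
  | kappa : IsSpine (.kappa k)
  | app : IsSpine q → IsSpine (.app q r)

/-- Head normal forms `λα₁…λαₙ.κ e₁…eₘ`. -/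
inductive IsHNF : Mx → Prop where
  | spine : IsSpine q → IsHNF q
  | lam : IsHNF q → IsHNF (.lam a q)

/-- Terms whose head constant is `κ`: `κ e₁ … eₘ`. -/
inductive HeadK (k : FSym) : Mx → Prop where
  | kappa : HeadK k (.kappa k)
  | app : HeadK k q → HeadK k (.app q r)

def Mx.IsRedex : Mx → Prop
  | .mu _ _ => True
  | .app (.lam _ _) _ => True
  | _ => False

def Mx.IsName : Mx → Prop
  | .kappa _ => True
  | .evar _ => True
  | _ => False
/-- Big-step resolution with evidence: `Φ ⊢ A ⇓ e`. -/
inductive BigStep (Φ : List (FSym × Cl)) : Atm → Mx → Prop where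
  | res : ∀ (κ : FSym) (c : Cl) (σ : Sb) (es : List Mx),
      (κ, c) ∈ Φ →
      es.length = c.body.length →
      (∀ i (h : i < c.body.length) (h' : i < es.length),
        BigStep Φ (Atm.subst σ (c.body.get ⟨i, h⟩)) (es.get ⟨i, h'⟩)) →
      BigStep Φ (Atm.subst σ c.head) (appsMx (.kappa κ) es)

/-- Small-step resolution `Φ ⊢ C[σA] → C[κ (σB₁) … (σBₙ)]`, with contexts `C ::= • | C q | q C`. -/
inductive Step (Φ : List (FSym × Cl)) : Mx → Mx → Prop where
  | res : ∀ (κ : FSym) (c : Cl) (σ : Sb),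
      (κ, c) ∈ Φ →
      Step Φ (.atom (c.head.subst σ)) (appsMx (.kappa κ) (c.body.map fun B => .atom (B.subst σ)))
  | appL : Step Φ q q' → Step Φ (.app q r) (.app q' r)
  | appR : Step Φ r r' → Step Φ (.app q r) (.app q r')

/-- Weak head evidence reduction (contexts `C ::= • | C e`). -/
inductive WH : Mx → Mx → Prop where
  | beta : WH (.app (.lam a e) e') (Mx.esubst a e' e)
  | mu : WH (.mu a e) (Mx.esubst a (.mu a e) e)
  | appL : WH e e'' → WH (.app e e') (.app e'' e')

/-- Termination of weak head reduction from `e`. -/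
def WHTerminates (e : Mx) : Prop := Acc (fun x y => WH y x) e

/-- Small-step evidence reduction on mixed terms; only outermost redexes are contracted. -/
inductive EStep : Mx → Mx → Prop where
  | beta : EStep (.app (.lam a q) r) (Mx.esubst a r q)
  | mu : EStep (.mu a q) (Mx.esubst a (.mu a q) q)
  | appL : ¬ (Mx.app q r).IsRedex → EStep q q' → EStep (.app q r) (.app q' r)
  | appR : ¬ (Mx.app q r).IsRedex → EStep r r' → EStep (.app q r) (.app q r')

/-- Formulas `F ::= A | F ⇒ F' | ∀x.F`. -/
inductive Fm where
  | atom : Atm → Fm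
  | imp : Fm → Fm → Fm
  | all : Var → Fm → Fm

/-- `∀x₁…∀xₙ.F`. -/
def Fm.alls (xs : List Var) (F : Fm) : Fm := xs.foldr .all F

/-- The Horn formula `B₁, …, Bₙ ⇒ A` as a formula. -/
def hornFm (Bs : List Atm) (A : Atm) : Fm :=
  Bs.foldr (fun B F => .imp (.atom B) F) (.atom A)

def Fm.substF (γ : Sb) : Fm → Fm
  | .atom A => .atom (A.subst γ)
  | .imp F G => .imp (F.substF γ) (G.substF γ)
  | .all x F => .all x (F.substF fun y => if y = x then Tm.var y else γ y)

/-- `[t/x]F`. -/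
def Fm.substT (x : Var) (t : Tm) (F : Fm) : Fm :=
  F.substF fun y => if y = x then t else Tm.var y

inductive Fm.HasFV : Fm → Var → Prop where
  | atom : A.HasVar x → Fm.HasFV (.atom A) x
  | impL : Fm.HasFV F x → Fm.HasFV (.imp F G) x
  | impR : Fm.HasFV G x → Fm.HasFV (.imp F G) x
  | all : Fm.HasFV F x → x ≠ y → Fm.HasFV (.all y F) x

inductive Fm.HasConst : Fm → FSym → Prop where
  | atom : A.HasConst c → Fm.HasConst (.atom A) c
  | impL : Fm.HasConst F c → Fm.HasConst (.imp F G) c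
  | impR : Fm.HasConst G c → Fm.HasConst (.imp F G) c
  | all : Fm.HasConst F c → Fm.HasConst (.all y F) c

/-- Environments for corecursive resolution / Howard's type system:
formulas supported by arbitrary evidence. -/
abbrev Ctx := List (Mx × Fm)

/-- `c` is a fresh constant w.r.t. environment `Φ` and formula `F`. -/
def FreshConst (c : FSym) (Φ : Ctx) (F : Fm) : Prop :=
  ¬ F.HasConst c ∧ ∀ p ∈ Φ, ¬ p.2.HasConst c

/-- `γ` instantiates exactly the free variables of `F` with fresh term constants (eigenvariables). -/
def Eigen (γ : Sb) (Φ : Ctx) (F : Fm) : Prop :=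
  ∀ x, (F.HasFV x → ∃ c, γ x = Tm.node c [] ∧ FreshConst c Φ F) ∧
       (¬ F.HasFV x → γ x = Tm.var x)

/-- Corecursive resolution `Φ ⊢ F ⇓ e`. -/
inductive CoRes : Ctx → Fm → Mx → Prop where
  | res : ∀ (Φ : Ctx) (e : Mx) (xs : List Var) (Bs : List Atm) (A : Atm) (σ : Sb) (es : List Mx),
      (e, Fm.alls xs (hornFm Bs A)) ∈ Φ →
      es.length = Bs.length →
      (∀ i (h : i < Bs.length) (h' : i < es.length),
        CoRes Φ (.atom ((Bs.get ⟨i, h⟩).subst σ)) (es.get ⟨i, h'⟩)) →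
      CoRes Φ (.atom (A.subst σ)) (appsMx e es)
  | mu : ∀ (Φ : Ctx) (F : Fm) (a : Var) (e : Mx),
      CoRes ((.evar a, F) :: Φ) F e → IsHNF e → CoRes Φ F (.mu a e)
  | lam : ∀ (Φ : Ctx) (G B : Fm) (a : Var) (e : Mx) (γ : Sb),
      Eigen γ Φ (.imp G B) →
      CoRes ((.evar a, G.substF γ) :: Φ) (B.substF γ) e →
      CoRes Φ (.imp G B) (.lam a e)

/-- Howard's type system (with the guarded Mu rule). -/
inductive Typing : Ctx → Mx → Fm → Prop where
  | assump : (e, F) ∈ Φ → Typing Φ e F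
  | app : Typing Φ e₁ F' → Typing Φ e₂ (.imp F' F) → Typing Φ (.app e₂ e₁) F
  | abs : Typing ((.evar a, F') :: Φ) e F → Typing Φ (.lam a e) (.imp F' F)
  | gen : Typing Φ e F → (∀ p ∈ Φ, ¬ p.2.HasFV x) → Typing Φ e (.all x F)
  | inst : Typing Φ e (.all x F) → Typing Φ e (F.substT x t)
  | mu : Typing ((.evar a, F) :: Φ) e F → IsHNF e → Typing Φ (.mu a e) F

/-- Generalized resolution on sets of (environment, goal) pairs. -/
inductive GRStep : Multiset (Ctx × Fm) → Multiset (Ctx × Fm) → Prop where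
  | res : ∀ (S : Multiset (Ctx × Fm)) (Φ : Ctx) (a : Mx) (xs : List Var)
      (Gs : List Atm) (A : Atm) (σ : Sb),
      (a, Fm.alls xs (hornFm Gs A)) ∈ Φ →
      GRStep ((Φ, Fm.atom (A.subst σ)) ::ₘ S)
             (↑(Gs.map fun G => (Φ, Fm.atom (G.subst σ))) + S)
  | lam : ∀ (S : Multiset (Ctx × Fm)) (Φ : Ctx) (G B : Fm) (a : Var) (γ : Sb),
      Eigen γ Φ (.imp G B) →
      GRStep ((Φ, Fm.imp G B) ::ₘ S)
             (((((Mx.evar a, G.substF γ)) :: Φ, B.substF γ)) ::ₘ S)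
  | all : ∀ (S : Multiset (Ctx × Fm)) (Φ : Ctx) (x : Var) (F : Fm) (c : FSym),
      FreshConst c Φ (.all x F) →
      GRStep ((Φ, Fm.all x F) ::ₘ S) ((Φ, F.substT x (Tm.node c [])) ::ₘ S)

/-- A labelled Horn clause as a (universally closed) formula. -/
def Cl.toFm (c : Cl) : Fm :=
  Fm.alls c.head.fvList.dedup (hornFm c.body c.head)

/-- A Horn clause environment as a corecursive-resolution environment. -/
def toCtx (Φ : List (FSym × Cl)) : Ctx :=
  Φ.map fun p => (Mx.kappa p.1, p.2.toFm)

/-- `n`-fold nesting `C'ⁿ` of a context, with the substitution applied appropriately: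
`C'⁰ = •` and `C'ⁿ⁺¹ = (σⁿ C')[C'ⁿ]`. -/
def iterCtx (σ : Sb) (C : Mx) : ℕ → Mx
  | 0 => .hole 0
  | n + 1 => (C.tsubst (Sb.pow σ n)).fill1 (iterCtx σ C n)
mutual
/-- The least general anti-unifier `t ⊔ t'`, relative to an injective choice
function `φ` from pairs of terms to fresh variables. -/
def au (φ : Tm × Tm → Var) : Tm → Tm → Tm
  | .node k ts, .node k' ts' =>
      if k = k' ∧ ts.length = ts'.length then .node k (auList φ ts ts')
      else .var (φ (.node k ts, .node k' ts'))
  | t, t' => .var (φ (t, t'))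

def auList (φ : Tm × Tm → Var) : List Tm → List Tm → List Tm
  | t :: ts, t' :: ts' => au φ t t' :: auList φ ts ts'
  | _, _ => []
end

/-- The anti-unifier `P t₁ … tₙ ⊔ P t₁' … tₙ'` of two atomic formulas with the same predicate. -/
def auAtm (φ : Tm × Tm → Var) (A B : Atm) : Atm := ⟨A.pred, auList φ A.args B.args⟩

/-- Renaming of variables in a term. -/
def Tm.rename (ρ : Var → Var) (t : Tm) : Tm := t.subst fun x => Tm.var (ρ x)

def Atm.rename (ρ : Var → Var) (A : Atm) : Atm := A.subst fun x => Tm.var (ρ x)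

/-! A resolution step replaces one atom `σA` by the atoms `σB₁, …, σBₙ`. Since substitution maps
every symbol occurrence to a nonempty multiset, Paterson's condition `Bᵢ.symbols < A.symbols`
still gives `|σBᵢ| < |σA|` for the sizes of the instances. So the multiset of atom sizes of a
mixed term decreases in the Dershowitz–Manna order, which is well-founded over `ℕ`. -/

theorem Multiset.bind_lt_bind_of_ne_zero {α β : Type*} {s t : Multiset α} {f : α → Multiset β}
    (hf : ∀ a, f a ≠ 0) (h : s < t) : s.bind f < t.bind f := by
  obtain ⟨u, rfl⟩ := Multiset.le_iff_exists_add.mp h.le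
  have hu : u ≠ 0 := by rintro rfl; simp at h
  obtain ⟨a, ha⟩ := Multiset.exists_mem_of_ne_zero hu
  obtain ⟨b, hb⟩ := Multiset.exists_mem_of_ne_zero (hf a)
  have hbind : u.bind f ≠ 0 := fun h0 => by
    simpa [h0] using Multiset.mem_bind.mpr ⟨a, ha, hb⟩
  rw [Multiset.add_bind]
  exact lt_add_of_pos_right _ (pos_iff_ne_zero.mpr hbind)

theorem Multiset.IsDershowitzMannaLT.add_left {α : Type*} [Preorder α] {M N : Multiset α}
    (h : M.IsDershowitzMannaLT N) (P : Multiset α) : (P + M).IsDershowitzMannaLT (P + N) := by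
  obtain ⟨X, Y, Z, hZ, rfl, rfl, hYZ⟩ := h
  exact ⟨P + X, Y, Z, hZ, (add_assoc _ _ _).symm, (add_assoc _ _ _).symm, hYZ⟩

theorem Multiset.IsDershowitzMannaLT.add_right {α : Type*} [Preorder α] {M N : Multiset α}
    (h : M.IsDershowitzMannaLT N) (P : Multiset α) : (M + P).IsDershowitzMannaLT (N + P) := by
  simpa only [add_comm _ P] using h.add_left P

def Sb.symbolImage (σ : Sb) : FSym ⊕ Var → Multiset (FSym ⊕ Var)
  | .inl k => {.inl k}
  | .inr x => (σ x).symbols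

theorem Tm.symbols_ne_zero : (t : Tm) → t.symbols ≠ 0
  | .var _ | .node _ _ => by rw [Tm.symbols]; simp

theorem Sb.symbolImage_ne_zero (σ : Sb) : ∀ s, σ.symbolImage s ≠ 0
  | .inl _ => by simp [Sb.symbolImage]
  | .inr _ => Tm.symbols_ne_zero _

theorem Tm.subst_node (σ : Sb) (k : FSym) (ts : List Tm) :
    (Tm.node k ts).subst σ = .node k (ts.map (Tm.subst σ)) := by
  rw [Tm.subst]; congr 1; simp

theorem Tm.symbols_node (k : FSym) (ts : List Tm) :
    (Tm.node k ts).symbols = .inl k ::ₘ (ts.map Tm.symbols).sum := by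
  rw [Tm.symbols]; congr 1; simp

theorem Tm.sum_map_symbols_subst (σ : Sb) (ts : List Tm)
    (h : ∀ t ∈ ts, (t.subst σ).symbols = t.symbols.bind σ.symbolImage) :
    (ts.map fun t => (t.subst σ).symbols).sum = (ts.map Tm.symbols).sum.bind σ.symbolImage := by
  induction ts with
  | nil => simp
  | cons t ts ih =>
    simp only [List.map_cons, List.sum_cons, Multiset.add_bind, List.forall_mem_cons] at h ⊢
    rw [h.1, ih h.2]

theorem Tm.symbols_subst (σ : Sb) : (t : Tm) → (t.subst σ).symbols = t.symbols.bind σ.symbolImage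
  | .var _ => by rw [Tm.subst, Tm.symbols]; simp [Sb.symbolImage]
  | .node k ts => by
    have ih : ∀ t ∈ ts, (t.subst σ).symbols = t.symbols.bind σ.symbolImage := fun t _ =>
      Tm.symbols_subst σ t
    rw [Tm.subst_node, Tm.symbols_node, Tm.symbols_node, Multiset.cons_bind, List.map_map,
      Function.comp_def, Tm.sum_map_symbols_subst σ ts ih, Sb.symbolImage, Multiset.singleton_add]
decreasing_by have := List.sizeOf_lt_of_mem ‹t ∈ ts›; simp_all; omega

theorem Atm.symbols_subst (σ : Sb) (A : Atm) :
    (A.subst σ).symbols = A.symbols.bind σ.symbolImage := by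
  simp only [Atm.symbols, Atm.subst, List.map_map, Function.comp_def]
  exact Tm.sum_map_symbols_subst σ A.args fun t _ => Tm.symbols_subst σ t

theorem Cl.Paterson.card_symbols_subst_lt {c : Cl} (hc : c.Paterson) (σ : Sb) {B : Atm}
    (hB : B ∈ c.body) :
    Multiset.card (B.subst σ).symbols < Multiset.card (c.head.subst σ).symbols := by
  rw [Atm.symbols_subst, Atm.symbols_subst]
  exact Multiset.card_lt_card
    (Multiset.bind_lt_bind_of_ne_zero σ.symbolImage_ne_zero (hc B hB))

def Mx.atomSizes (q : Mx) : Multiset ℕ :=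
  q.atoms.map fun A => Multiset.card A.symbols

theorem Mx.atoms_appsMx (e : Mx) (es : List Mx) :
    (appsMx e es).atoms = e.atoms ++ es.flatMap Mx.atoms := by
  induction es generalizing e with
  | nil => simp [appsMx]
  | cons q es ih =>
    change (appsMx (.app e q) es).atoms = _
    rw [ih, Mx.atoms, List.flatMap_cons, List.append_assoc]

theorem Step.atomSizes_lt {Φ : List (FSym × Cl)} (hP : ∀ p ∈ Φ, p.2.Paterson) {q q' : Mx}
    (h : Step Φ q q') : q'.atomSizes.IsDershowitzMannaLT q.atomSizes := by
  induction h with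
  | res κ c σ hmem =>
    refine ⟨0, c.body.map fun B => Multiset.card (B.subst σ).symbols,
      {Multiset.card (c.head.subst σ).symbols}, by simp, ?_, rfl, ?_⟩
    · simp [Mx.atomSizes, Mx.atoms_appsMx, Mx.atoms, List.flatMap_map, ← List.map_eq_flatMap,
        Function.comp_def]
    · simpa using fun B hB => (hP _ hmem).card_symbols_subst_lt σ hB
  | appL _ ih =>
    simpa only [Mx.atomSizes, Mx.atoms, List.map_append, ← Multiset.coe_add] using ih.add_right _
  | appR _ ih =>
    simpa only [Mx.atomSizes, Mx.atoms, List.map_append, ← Multiset.coe_add] using ih.add_left _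

/-- If every clause of `Φ` satisfies Paterson's condition, then small-step resolution
terminates: every resolution tree over `Φ` is finite. -/
theorem paterson_terminates (Φ : List (FSym × Cl))
    (hP : ∀ p ∈ Φ, p.2.Paterson) :
    WellFounded (fun q' q : Mx => Step Φ q q') :=
  Subrelation.wf (fun h => Step.atomSizes_lt hP h)
    (InvImage.wf Mx.atomSizes Multiset.wellFounded_isDershowitzMannaLT)
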